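/- arXiv:1305.4028 — 2 statements merged into one kernel-verified Lean document; each statement's English description precedes it below -/
import Mathlib

section
/- If f solves the radial Ginzburg-Landau ODE −f'' − f'/r + f/r² = (1/ε²) f (1 − f²) on (0,1) with 0 ≤ f ≤ 1 and f' > 0 on (0,1), then the energy density B_ε(r) = (1/2)(f'(r)² + f(r)²/r²) + (1/(4ε²))(f(r)² − 1)² is nonincreasing on (0,1). -/
/-!
Differentiating `B` and eliminating `f''` with the equation gives
`B' = -(f' - f/r)² / r - (2/ε²) f f' (1 - f²)`,
and both terms are nonpositive when `r > 0`, `0 ≤ f ≤ 1` and `f' ≥ 0`.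
-/

open Set

theorem antitoneOn_of_hasDerivAt_nonpos {D : Set ℝ} {F : ℝ → ℝ} (hD : Convex ℝ D)
    (hDo : IsOpen D) (hF : ∀ x ∈ D, ∃ F', HasDerivAt F F' x ∧ F' ≤ 0) : AntitoneOn F D := by
  choose F' hF hF' using hF
  refine antitoneOn_of_deriv_nonpos hD (fun x hx => (hF x hx).continuousAt.continuousWithinAt)
    ?_ ?_ <;> rw [hDo.interior_eq]
  · exact fun x hx => (hF x hx).differentiableAt.differentiableWithinAt
  · exact fun x hx => (hF x hx).deriv ▸ hF' x hx

theorem ContDiffOn.hasDerivAt_deriv_of_isOpen {f : ℝ → ℝ} {U : Set ℝ} {x : ℝ}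
    (hf : ContDiffOn ℝ 2 f U) (hU : IsOpen U) (hx : x ∈ U) :
    HasDerivAt f (deriv f x) x ∧ HasDerivAt (deriv f) (deriv (deriv f) x) x := by
  have hf' : ContDiffOn ℝ 1 (deriv f) U := hf.deriv_of_isOpen hU (by norm_num)
  exact ⟨((hf.contDiffAt (hU.mem_nhds hx)).differentiableAt (by norm_num)).hasDerivAt,
    ((hf'.contDiffAt (hU.mem_nhds hx)).differentiableAt (by norm_num)).hasDerivAt⟩

/-- `B_ε` with `k = 1 / ε²` and with `f'` replaced by an independent function `g`. -/
noncomputable def radialEnergyDensity (k : ℝ) (f g : ℝ → ℝ) (s : ℝ) : ℝ :=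
  (1 / 2) * (g s ^ 2 + f s ^ 2 / s ^ 2) + k / 4 * (f s ^ 2 - 1) ^ 2

section RadialEnergyDensity

variable {k s c : ℝ} {f g : ℝ → ℝ}

theorem hasDerivAt_radialEnergyDensity (hf : HasDerivAt f (g s) s) (hg : HasDerivAt g c s)
    (hs : s ≠ 0) :
    HasDerivAt (radialEnergyDensity k f g)
      (g s * c + f s * g s / s ^ 2 - f s ^ 2 / s ^ 3 + k * f s * g s * (f s ^ 2 - 1)) s := by
  have hf2 : HasDerivAt (fun s => f s ^ 2) (2 * f s * g s) s := by
    simpa using hf.fun_pow 2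
  have hg2 : HasDerivAt (fun s => g s ^ 2) (2 * g s * c) s := by
    simpa using hg.fun_pow 2
  have hquot : HasDerivAt (fun s => f s ^ 2 / s ^ 2)
      ((2 * f s * g s * s ^ 2 - f s ^ 2 * (2 * s)) / (s ^ 2) ^ 2) s :=
    hf2.div (by simpa using hasDerivAt_pow 2 s) (pow_ne_zero 2 hs)
  have hwell :
      HasDerivAt (fun s => (f s ^ 2 - 1) ^ 2) (2 * (f s ^ 2 - 1) * (2 * f s * g s)) s := by
    simpa using (hf2.sub_const 1).fun_pow 2
  refine (((hg2.add hquot).const_mul (1 / 2)).add (hwell.const_mul (k / 4))).congr_deriv ?_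
  field_simp
  ring

theorem radialEnergyDensity_deriv_eq_of_ode {a b : ℝ} (hs : s ≠ 0)
    (hode : -c - b / s + a / s ^ 2 = k * a * (1 - a ^ 2)) :
    b * c + a * b / s ^ 2 - a ^ 2 / s ^ 3 + k * a * b * (a ^ 2 - 1)
      = -((b - a / s) ^ 2 / s) - 2 * k * (a * b * (1 - a ^ 2)) := by
  have hc : c = -(b / s) + a / s ^ 2 - k * a * (1 - a ^ 2) := by linarith
  subst hc
  field_simp
  ring

theorem radialEnergyDensity_deriv_nonpos {a b : ℝ} (hs : 0 < s) (hk : 0 ≤ k) (ha₀ : 0 ≤ a)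
    (ha₁ : a ≤ 1) (hb : 0 ≤ b) :
    -((b - a / s) ^ 2 / s) - 2 * k * (a * b * (1 - a ^ 2)) ≤ 0 := by
  have hgrad : 0 ≤ (b - a / s) ^ 2 / s := by positivity
  have hpot : 0 ≤ a * b * (1 - a ^ 2) := by
    have : 0 ≤ 1 - a ^ 2 := by nlinarith
    positivity
  nlinarith

end RadialEnergyDensity

theorem energy_density_antitone_general
    (ε : ℝ) (f : ℝ → ℝ)
    (hf : ContDiffOn ℝ 2 f (Ioo 0 1))
    (hbound : ∀ r ∈ Ioo (0:ℝ) 1, 0 ≤ f r ∧ f r ≤ 1)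
    (hf' : ∀ r ∈ Ioo (0:ℝ) 1, 0 < deriv f r)
    (hode : ∀ r ∈ Ioo (0:ℝ) 1,
      -(deriv (deriv f) r) - deriv f r / r + f r / r ^ 2
        = (1 / ε ^ 2) * f r * (1 - (f r) ^ 2)) :
    AntitoneOn (fun s => (1/2) * ((deriv f s) ^ 2 + (f s) ^ 2 / s ^ 2)
        + (1 / (4 * ε ^ 2)) * ((f s) ^ 2 - 1) ^ 2) (Ioo 0 1) := by
  have hB : (fun s => (1/2) * ((deriv f s) ^ 2 + (f s) ^ 2 / s ^ 2)
      + (1 / (4 * ε ^ 2)) * ((f s) ^ 2 - 1) ^ 2)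
      = radialEnergyDensity (1 / ε ^ 2) f (deriv f) := by
    funext s
    rw [radialEnergyDensity, div_div, mul_comm (ε ^ 2)]
  rw [hB]
  refine antitoneOn_of_hasDerivAt_nonpos (convex_Ioo 0 1) isOpen_Ioo fun s hs => ?_
  obtain ⟨hf₁, hf₂⟩ := hf.hasDerivAt_deriv_of_isOpen isOpen_Ioo hs
  refine ⟨_, hasDerivAt_radialEnergyDensity hf₁ hf₂ hs.1.ne', ?_⟩
  rw [radialEnergyDensity_deriv_eq_of_ode hs.1.ne' (hode s hs)]
  exact radialEnergyDensity_deriv_nonpos hs.1 (by positivity) (hbound s hs).1 (hbound s hs).2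
    (hf' s hs).le

theorem energy_density_antitone
    (ε : ℝ) (hε : 0 < ε) (f : ℝ → ℝ)
    (hf : ContDiffOn ℝ 2 f (Ioo 0 1))
    (hbound : ∀ r ∈ Ioo (0:ℝ) 1, 0 ≤ f r ∧ f r ≤ 1)
    (hf' : ∀ r ∈ Ioo (0:ℝ) 1, 0 < deriv f r)
    (hode : ∀ r ∈ Ioo (0:ℝ) 1,
      -(deriv (deriv f) r) - deriv f r / r + f r / r ^ 2
        = (1 / ε ^ 2) * f r * (1 - (f r) ^ 2)) :
    AntitoneOn (fun s => (1/2) * ((deriv f s) ^ 2 + (f s) ^ 2 / s ^ 2)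
        + (1 / (4 * ε ^ 2)) * ((f s) ^ 2 - 1) ^ 2) (Ioo 0 1) :=
  energy_density_antitone_general ε f hf hbound hf' hode
end

section
/- Strict decrease of the energy density at non-conformal points: if f solves the radial GL ODE on (0,1) with 0 < f < 1 and f' > 0 on (0,1), then B_ε'(r) < 0 at every r ∈ (0,1), and moreover B_ε'(r) ≤ −(2/ε²) f(r) f'(r)(1 − f(r)²) < 0. -/
/-!
Differentiating `B_ε` and eliminating `f''` with the ODE gives the exact identity
`B_ε' = -(1/r) (f' - f/r)² - (2/ε²) f f' (1 - f²)`.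
The first term is `≤ 0`, with equality exactly where `f' = f/r` (the conformal points), and the
second is `< 0` as soon as `0 < f < 1` and `f' > 0`.
-/

open Set

/-- The paper's `B_ε`. -/
noncomputable def energyDensity (ε : ℝ) (f : ℝ → ℝ) (s : ℝ) : ℝ :=
  (1/2) * ((deriv f s) ^ 2 + (f s) ^ 2 / s ^ 2) + (1 / (4 * ε ^ 2)) * ((f s) ^ 2 - 1) ^ 2

lemma ContDiffOn.differentiableAt_deriv {f : ℝ → ℝ} {s : Set ℝ} (hf : ContDiffOn ℝ 2 f s)
    (hs : IsOpen s) {x : ℝ} (hx : x ∈ s) : DifferentiableAt ℝ (deriv f) x :=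
  ((hf.deriv_of_isOpen hs (by norm_num : (1 : WithTop ℕ∞) + 1 ≤ 2)).contDiffAt
    (hs.mem_nhds hx)).differentiableAt one_ne_zero

lemma hasDerivAt_energyDensity {ε r : ℝ} {f : ℝ → ℝ} (hr : r ≠ 0)
    (hf : DifferentiableAt ℝ f r) (hf' : DifferentiableAt ℝ (deriv f) r) :
    HasDerivAt (energyDensity ε f)
      (deriv f r * deriv (deriv f) r + f r * deriv f r / r ^ 2 - f r ^ 2 / r ^ 3
        + (1 / ε ^ 2) * (f r ^ 2 - 1) * f r * deriv f r) r := by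
  have hsq : HasDerivAt (fun s => f s ^ 2) (2 * f r * deriv f r) r := by
    simpa [mul_comm] using hf.hasDerivAt.fun_pow 2
  have hkinetic := hf'.hasDerivAt.fun_pow 2
  have hangular := hsq.div (hasDerivAt_pow 2 r) (pow_ne_zero 2 hr)
  have hpotential := (hsq.sub_const 1).fun_pow 2
  refine (((hkinetic.add hangular).const_mul (1/2)).add (hpotential.const_mul (1 / (4 * ε ^ 2))) :
    HasDerivAt (energyDensity ε f) _ r).congr_deriv ?_
  field_simp
  ring

lemma deriv_energyDensity_of_ode {ε r : ℝ} {f : ℝ → ℝ} (hr : r ≠ 0)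
    (hf : DifferentiableAt ℝ f r) (hf' : DifferentiableAt ℝ (deriv f) r)
    (hode : -(deriv (deriv f) r) - deriv f r / r + f r / r ^ 2
        = (1 / ε ^ 2) * f r * (1 - (f r) ^ 2)) :
    deriv (energyDensity ε f) r
      = -(1 / r) * (deriv f r - f r / r) ^ 2 - (2 / ε ^ 2) * f r * deriv f r * (1 - f r ^ 2) := by
  rw [(hasDerivAt_energyDensity hr hf hf').deriv]
  have hf'' : deriv (deriv f) r
      = -(deriv f r / r) + f r / r ^ 2 - (1 / ε ^ 2) * f r * (1 - f r ^ 2) := by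
    linarith
  rw [hf'']
  field_simp
  ring

theorem energy_density_strict_decrease
    (ε : ℝ) (hε : 0 < ε) (f : ℝ → ℝ)
    (hf : ContDiffOn ℝ 2 f (Ioo 0 1))
    (hbound : ∀ r ∈ Ioo (0:ℝ) 1, 0 < f r ∧ f r < 1)
    (hf' : ∀ r ∈ Ioo (0:ℝ) 1, 0 < deriv f r)
    (hode : ∀ r ∈ Ioo (0:ℝ) 1,
      -(deriv (deriv f) r) - deriv f r / r + f r / r ^ 2
        = (1 / ε ^ 2) * f r * (1 - (f r) ^ 2)) :
    ∀ r ∈ Ioo (0:ℝ) 1,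
      deriv (fun s => (1/2) * ((deriv f s) ^ 2 + (f s) ^ 2 / s ^ 2)
          + (1 / (4 * ε ^ 2)) * ((f s) ^ 2 - 1) ^ 2) r
        ≤ -(2 / ε ^ 2) * f r * deriv f r * (1 - (f r) ^ 2) ∧
      -(2 / ε ^ 2) * f r * deriv f r * (1 - (f r) ^ 2) < 0 ∧
      deriv (fun s => (1/2) * ((deriv f s) ^ 2 + (f s) ^ 2 / s ^ 2)
          + (1 / (4 * ε ^ 2)) * ((f s) ^ 2 - 1) ^ 2) r < 0 := by
  intro r hr
  have hB : deriv (energyDensity ε f) r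
      = -(1 / r) * (deriv f r - f r / r) ^ 2 - (2 / ε ^ 2) * f r * deriv f r * (1 - f r ^ 2) :=
    deriv_energyDensity_of_ode hr.1.ne'
      ((hf.contDiffAt (isOpen_Ioo.mem_nhds hr)).differentiableAt two_ne_zero)
      (hf.differentiableAt_deriv isOpen_Ioo hr) (hode r hr)
  have hconformal : 0 ≤ 1 / r * (deriv f r - f r / r) ^ 2 := by
    have := hr.1
    positivity
  obtain ⟨hpos, hlt⟩ := hbound r hr
  have hreaction : 0 < 2 / ε ^ 2 * f r * deriv f r * (1 - f r ^ 2) := by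
    have := hf' r hr
    have : 0 < 1 - f r ^ 2 := by nlinarith
    positivity
  change deriv (energyDensity ε f) r ≤ _ ∧ _ ∧ deriv (energyDensity ε f) r < 0
  refine ⟨?_, ?_, ?_⟩ <;> linarith
end
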